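/- arXiv:1402.3859 — 6 statements merged into one kernel-verified Lean document; each statement's English description precedes it below -/
import Mathlib

section
/- In BS(1,q) with q ≥ 2, every element x with x = t^{-m} a^N t^n in normal form (m, n ≥ 0, N ≠ 0) has word length at most m + n + 2q(⌊log_q |N|⌋ + 1) with respect to the generating set {a, a⁻¹, t, t⁻¹}. -/
def bsRel (p q : ℕ) : Set (FreeGroup Bool) :=
  {FreeGroup.of true * FreeGroup.of false ^ p * (FreeGroup.of true)⁻¹ * (FreeGroup.of false ^ q)⁻¹}

/-- The Baumslag–Solitar group BS(p,q) = ⟨a,t | t a^p t⁻¹ = a^q⟩. -/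
abbrev BS (p q : ℕ) : Type := PresentedGroup (bsRel p q)

def BS.a (p q : ℕ) : BS p q := PresentedGroup.of false
def BS.t (p q : ℕ) : BS p q := PresentedGroup.of true

/-- The symmetric generating set {a, a⁻¹, t, t⁻¹}. -/
def genSet (p q : ℕ) : Set (BS p q) := {BS.a p q, (BS.a p q)⁻¹, BS.t p q, (BS.t p q)⁻¹}

/-- Word length with respect to {a^{±1}, t^{±1}}. -/
noncomputable def wlen (p q : ℕ) (x : BS p q) : ℕ :=
  sInf {n | ∃ l : List (BS p q), l.length = n ∧ (∀ g ∈ l, g ∈ genSet p q) ∧ l.prod = x}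

/-- The syllable a^j t^{±1} : `(j, true)` ↦ a^j t, `(j, false)` ↦ a^j t⁻¹. -/
def syl (p q : ℕ) (s : ℕ × Bool) : BS p q :=
  BS.a p q ^ s.1 * if s.2 then BS.t p q else (BS.t p q)⁻¹


/-!
Word length is subadditive, so it suffices to bound the length of `a ^ k` for `k = |N|`.
The relation `t a t⁻¹ = a ^ q` gives `a ^ k = a ^ (k % q) * t * a ^ (k / q) * t⁻¹`, so each
base-`q` digit of `k` costs at most `q - 1` letters `a` and two letters `t^{±1}`, and `k` has
`Nat.log q k + 1` digits.
-/

namespace BS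

variable {p q : ℕ}

lemma t_mul_a_pow_mul_t_inv : t p q * a p q ^ p * (t p q)⁻¹ = a p q ^ q := by
  have hrel : PresentedGroup.mk (bsRel p q)
      (FreeGroup.of true * FreeGroup.of false ^ p * (FreeGroup.of true)⁻¹ *
        (FreeGroup.of false ^ q)⁻¹) = 1 :=
    (QuotientGroup.eq_one_iff _).mpr (Subgroup.subset_normalClosure rfl)
  simp only [map_mul, map_inv, map_pow] at hrel
  exact mul_inv_eq_one.mp hrel

lemma t_mul_a_zpow_mul_t_inv (M : ℤ) :
    t 1 q * a 1 q ^ M * (t 1 q)⁻¹ = a 1 q ^ (q * M) := by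
  have hrel := t_mul_a_pow_mul_t_inv (p := 1) (q := q)
  rw [pow_one] at hrel
  rw [← conj_zpow, hrel, ← zpow_natCast, ← zpow_mul]

lemma a_pow_eq_mod_mul_conj_div (k : ℕ) :
    a 1 q ^ k = a 1 q ^ (k % q) * (t 1 q * a 1 q ^ (k / q) * (t 1 q)⁻¹) := by
  rw [← zpow_natCast (a 1 q) (k / q), t_mul_a_zpow_mul_t_inv, ← zpow_natCast,
    ← zpow_natCast, ← zpow_add]
  exact_mod_cast congrArg (a 1 q ^ ·) (Nat.mod_add_div k q).symm

end BS

section WordLength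

variable {p q : ℕ}

lemma inv_mem_genSet {g : BS p q} (hg : g ∈ genSet p q) : g⁻¹ ∈ genSet p q := by
  simp only [genSet, Set.mem_insert_iff, Set.mem_singleton_iff] at hg ⊢
  rcases hg with rfl | rfl | rfl | rfl <;> simp

lemma closure_genSet : Subgroup.closure (genSet p q) = ⊤ := by
  refine eq_top_mono (Subgroup.closure_mono ?_) (PresentedGroup.closure_range_of _)
  rintro _ ⟨_ | _, rfl⟩
  · exact Or.inl rfl
  · exact Or.inr (Or.inr (Or.inl rfl))

lemma exists_word (x : BS p q) : ∃ l : List (BS p q), (∀ g ∈ l, g ∈ genSet p q) ∧ l.prod = x := by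
  have hx : x ∈ (Subgroup.closure (genSet p q)).toSubmonoid := by simp [closure_genSet]
  rw [Subgroup.closure_toSubmonoid] at hx
  obtain ⟨l, hl, rfl⟩ := Submonoid.exists_list_of_mem_closure hx
  refine ⟨l, fun g hg => ?_, rfl⟩
  rcases hl g hg with h | h
  · exact h
  · simpa using inv_mem_genSet (Set.mem_inv.mp h)

lemma exists_word_length_eq_wlen (x : BS p q) : ∃ l : List (BS p q),
    l.length = wlen p q x ∧ (∀ g ∈ l, g ∈ genSet p q) ∧ l.prod = x := by
  obtain ⟨l, hl, hprod⟩ := exists_word x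
  exact Nat.sInf_mem (s := {n | ∃ l : List (BS p q), l.length = n ∧ (∀ g ∈ l, g ∈ genSet p q) ∧
    l.prod = x}) ⟨l.length, l, rfl, hl, hprod⟩

lemma wlen_prod_le_length {l : List (BS p q)} (hl : ∀ g ∈ l, g ∈ genSet p q) :
    wlen p q l.prod ≤ l.length :=
  Nat.sInf_le ⟨l, rfl, hl, rfl⟩

lemma wlen_le_one_of_mem {g : BS p q} (hg : g ∈ genSet p q) : wlen p q g ≤ 1 := by
  simpa using wlen_prod_le_length (l := [g]) (by simpa using hg)

lemma wlen_mul_le (x y : BS p q) : wlen p q (x * y) ≤ wlen p q x + wlen p q y := by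
  obtain ⟨l, hlen, hl, rfl⟩ := exists_word_length_eq_wlen x
  obtain ⟨l', hlen', hl', rfl⟩ := exists_word_length_eq_wlen y
  rw [← hlen, ← hlen', ← List.length_append, ← List.prod_append]
  exact wlen_prod_le_length (by simpa [or_imp, forall_and] using And.intro hl hl')

lemma wlen_inv_le (x : BS p q) : wlen p q x⁻¹ ≤ wlen p q x := by
  obtain ⟨l, hlen, hl, rfl⟩ := exists_word_length_eq_wlen x
  have hinv := wlen_prod_le_length (l := (l.map (·⁻¹)).reverse)
    (by simpa using fun g (hg : g⁻¹ ∈ l) => inv_mem_genSet (hl _ hg))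
  rwa [← List.prod_inv_reverse, List.length_reverse, List.length_map, hlen] at hinv

lemma wlen_pow_le (x : BS p q) (n : ℕ) : wlen p q (x ^ n) ≤ n * wlen p q x := by
  induction n with
  | zero => simpa using wlen_prod_le_length (l := []) (by simp)
  | succ n ih =>
    calc wlen p q (x ^ (n + 1)) ≤ wlen p q (x ^ n) + wlen p q x := pow_succ x n ▸ wlen_mul_le _ _
      _ ≤ (n + 1) * wlen p q x := by rw [add_mul, one_mul]; exact Nat.add_le_add_right ih _

lemma wlen_pow_le_of_mem {g : BS p q} (hg : g ∈ genSet p q) (n : ℕ) : wlen p q (g ^ n) ≤ n :=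
  ((wlen_pow_le g n).trans (Nat.mul_le_mul_left n (wlen_le_one_of_mem hg))).trans_eq (mul_one n)

lemma a_mem_genSet : BS.a p q ∈ genSet p q := by simp [genSet]

lemma t_mem_genSet : BS.t p q ∈ genSet p q := by simp [genSet]

lemma t_inv_mem_genSet : (BS.t p q)⁻¹ ∈ genSet p q := inv_mem_genSet t_mem_genSet

end WordLength

section PowersOfA

variable {q : ℕ}

lemma wlen_a_pow_le (hq : 2 ≤ q) (k : ℕ) :
    wlen 1 q (BS.a 1 q ^ k) ≤ 2 * q * (Nat.log q k + 1) := by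
  induction k using Nat.strong_induction_on with
  | _ k ih =>
    rcases lt_or_ge k q with hk | hk
    · calc wlen 1 q (BS.a 1 q ^ k) ≤ k := wlen_pow_le_of_mem a_mem_genSet k
        _ ≤ 2 * q * (Nat.log q k + 1) := by nlinarith
    · have hdigit : wlen 1 q (BS.a 1 q ^ (k % q)) ≤ k % q := wlen_pow_le_of_mem a_mem_genSet _
      have hmod := Nat.mod_lt k (by omega : 0 < q)
      have ht : wlen 1 q (BS.t 1 q) ≤ 1 := wlen_le_one_of_mem t_mem_genSet
      have ht' : wlen 1 q (BS.t 1 q)⁻¹ ≤ 1 := wlen_le_one_of_mem t_inv_mem_genSet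
      have hquot := ih (k / q) (Nat.div_lt_self (by omega) (by omega))
      have hlog : Nat.log q (k / q) + 1 = Nat.log q k := by
        rw [Nat.log_div_base]; have := Nat.log_pos (by omega) hk; omega
      rw [hlog] at hquot
      rw [BS.a_pow_eq_mod_mul_conj_div]
      calc _ ≤ wlen 1 q (BS.a 1 q ^ (k % q)) + (wlen 1 q (BS.t 1 q) +
              wlen 1 q (BS.a 1 q ^ (k / q)) + wlen 1 q (BS.t 1 q)⁻¹) :=
            (wlen_mul_le _ _).trans (Nat.add_le_add_left
              ((wlen_mul_le _ _).trans (Nat.add_le_add_right (wlen_mul_le _ _) _)) _)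
        _ ≤ 2 * q * (Nat.log q k + 1) := by nlinarith

lemma wlen_a_zpow_le (hq : 2 ≤ q) (N : ℤ) :
    wlen 1 q (BS.a 1 q ^ N) ≤ 2 * q * (Nat.log q N.natAbs + 1) := by
  obtain ⟨k, rfl | rfl⟩ := Int.eq_nat_or_neg N
  · simpa using wlen_a_pow_le hq k
  · simpa using (wlen_inv_le _).trans (wlen_a_pow_le hq k)

end PowersOfA

theorem stmt2_general (q : ℕ) (hq : 2 ≤ q) (m n : ℕ) (N : ℤ)
    (x : BS 1 q) (hx : x = (BS.t 1 q)⁻¹ ^ m * BS.a 1 q ^ N * BS.t 1 q ^ n) :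
    wlen 1 q x ≤ m + n + 2 * q * (Nat.log q N.natAbs + 1) := by
  subst hx
  calc _ ≤ wlen 1 q ((BS.t 1 q)⁻¹ ^ m) + wlen 1 q (BS.a 1 q ^ N) + wlen 1 q (BS.t 1 q ^ n) :=
        (wlen_mul_le _ _).trans (Nat.add_le_add_right (wlen_mul_le _ _) _)
    _ ≤ m + 2 * q * (Nat.log q N.natAbs + 1) + n :=
        Nat.add_le_add (Nat.add_le_add (wlen_pow_le_of_mem t_inv_mem_genSet m)
          (wlen_a_zpow_le hq N)) (wlen_pow_le_of_mem t_mem_genSet n)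
    _ = m + n + 2 * q * (Nat.log q N.natAbs + 1) := by ring

/-- In BS(1,q) with q ≥ 2, every element x with normal form t^{-m} a^N t^n
(m,n ≥ 0, N ≠ 0, and q ∤ N unless m = 0 or n = 0) has word length at most
m + n + 2q(⌊log_q |N|⌋ + 1). -/
theorem stmt2 (q : ℕ) (hq : 2 ≤ q) (m n : ℕ) (N : ℤ) (hN : N ≠ 0)
    (hnf : m ≠ 0 → n ≠ 0 → ¬ ((q : ℤ) ∣ N))
    (x : BS 1 q) (hx : x = (BS.t 1 q)⁻¹ ^ m * BS.a 1 q ^ N * BS.t 1 q ^ n) :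
    wlen 1 q x ≤ m + n + 2 * q * (Nat.log q N.natAbs + 1) :=
  stmt2_general q hq m n N x hx
end

section
/- In BS(1,q) with q ≥ 2, if x = t^{-m} a^N t^n with N ≠ 0 and ‖x‖ = k is the word length with respect to {a^{±1}, t^{±1}}, then m + n ≤ k and log |N| ≤ (2 log q + 1) k; consequently m + n + log |N| ≤ (2 log q + 2)·‖x‖. -/
/-!
`BS(1,q)` acts on `ℚ` by affine maps, `a` as `y ↦ 1 + y` and `t` as `y ↦ q y`. A word of length
`L` with `P` letters `t` and `M` letters `t⁻¹` acts as `y ↦ (q^P y + c) / q^M` for an integer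
`c` with `|c| ≤ L q^L`, while `t^{-m} a^N t^n` acts as `y ↦ (q^n y + N) / q^m`. Comparing the two
gives `P + m = n + M` and `N q^M = c q^m`. In normal form with `m, n > 0` we have `q ∤ N`, which
forces `m ≤ M`; hence `m + n ≤ P + M ≤ L` and `|N| ≤ |c| q^m ≤ L q^{2L}`, and taking logarithms
gives the bound on `log |N|`.
-/

theorem exists_list_length_eq_wlen {p q : ℕ} (x : BS p q) :
    ∃ l : List (BS p q), l.length = wlen p q x ∧ (∀ g ∈ l, g ∈ genSet p q) ∧ l.prod = x := by
  have hgen : genSet p q = Set.range PresentedGroup.of ∪ (Set.range PresentedGroup.of)⁻¹ := by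
    ext g
    simp only [genSet, BS.a, BS.t, Set.mem_insert_iff, Set.mem_singleton_iff, Set.mem_union,
      Set.mem_range, Set.mem_inv, Bool.exists_bool, eq_comm (a := PresentedGroup.of _),
      ← inv_eq_iff_eq_inv]
    tauto
  have hx : x ∈ Submonoid.closure (genSet p q) := by
    rw [hgen, ← Subgroup.closure_toSubmonoid, PresentedGroup.closure_range_of]
    trivial
  obtain ⟨l, hl, rfl⟩ := Submonoid.exists_list_of_mem_closure hx
  exact Nat.sInf_mem (s := {n | ∃ l' : List (BS p q), l'.length = n ∧
    (∀ g ∈ l', g ∈ genSet p q) ∧ l'.prod = l.prod}) ⟨_, l, rfl, hl, rfl⟩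

section AffineRep

variable {q : ℕ} (hq : q ≠ 0)

noncomputable def affineRep : BS 1 q →* Equiv.Perm ℚ :=
  PresentedGroup.toGroup
    (f := fun b => if b then MulAction.toPermHom ℚˣ ℚ (Units.mk0 (q : ℚ) (Nat.cast_ne_zero.2 hq))
      else Equiv.addLeft 1) <| by
    rintro _ rfl
    ext y
    simp

theorem affineRep_a : affineRep hq (BS.a 1 q) = Equiv.addLeft 1 :=
  PresentedGroup.toGroup.of _

theorem affineRep_t :
    affineRep hq (BS.t 1 q) =
      MulAction.toPermHom ℚˣ ℚ (Units.mk0 (q : ℚ) (Nat.cast_ne_zero.2 hq)) :=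
  PresentedGroup.toGroup.of _

theorem affineRep_a_apply (y : ℚ) : affineRep hq (BS.a 1 q) y = 1 + y := by
  simp [affineRep_a]

theorem affineRep_a_inv_apply (y : ℚ) : affineRep hq (BS.a 1 q)⁻¹ y = -1 + y := by
  simp [affineRep_a]

theorem affineRep_t_apply (y : ℚ) : affineRep hq (BS.t 1 q) y = q * y := by
  simp [affineRep_t, Units.smul_def]

theorem affineRep_t_inv_apply (y : ℚ) : affineRep hq (BS.t 1 q)⁻¹ y = (q : ℚ)⁻¹ * y := by
  simp [affineRep_t, Units.smul_def]

theorem affineRep_normalForm (m n : ℕ) (N : ℤ) (y : ℚ) :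
    affineRep hq ((BS.t 1 q)⁻¹ ^ m * BS.a 1 q ^ N * BS.t 1 q ^ n) y * q ^ m = q ^ n * y + N := by
  rw [map_mul, map_mul, map_pow, map_inv, map_zpow, map_pow, affineRep_t, affineRep_a, ← map_inv,
    ← map_pow, ← map_pow, Equiv.zsmul_addLeft]
  simp only [inv_pow, MulAction.toPermHom_apply, zsmul_eq_mul, mul_one, Equiv.Perm.coe_mul,
    Equiv.coe_addLeft, Function.comp_apply, MulAction.toPerm_apply, Units.smul_def,
    Units.val_pow_eq_pow_val, Units.val_mk0, smul_eq_mul, Units.val_inv_eq_inv_val]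
  field_simp
  ring

theorem exists_affineRep_list_prod (l : List (BS 1 q)) (hl : ∀ g ∈ l, g ∈ genSet 1 q) :
    ∃ P M : ℕ, ∃ c : ℤ, P + M ≤ l.length ∧ |c| ≤ l.length * (q : ℤ) ^ l.length ∧
      ∀ y, affineRep hq l.prod y * q ^ M = q ^ P * y + c := by
  induction l with
  | nil => exact ⟨0, 0, 0, le_rfl, by simp, fun y => by simp⟩
  | cons g l ih =>
    obtain ⟨P, M, c, hPM, hc, hy⟩ := ih fun g hg => hl g (List.mem_cons_of_mem _ hg)
    have hq1 : (1 : ℤ) ≤ q := by omega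
    have hpowM : (q : ℤ) ^ M ≤ q ^ (l.length + 1) := pow_le_pow_right₀ hq1 (by omega)
    have hgrow : (l.length : ℤ) * q ^ l.length ≤ l.length * q ^ (l.length + 1) := by gcongr; omega
    have hpos : (0 : ℤ) ≤ q ^ (l.length + 1) := by positivity
    simp only [List.length_cons, List.prod_cons, map_mul, Equiv.Perm.mul_apply]
    push_cast
    rcases hl g List.mem_cons_self with rfl | rfl | rfl | rfl
    · refine ⟨P, M, c + q ^ M, by omega, ?_, fun y => ?_⟩
      · calc |c + q ^ M| ≤ |c| + q ^ M := by simpa using abs_add_le c ((q : ℤ) ^ M)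
          _ ≤ _ := by linarith
      · rw [affineRep_a_apply, add_mul, hy]
        push_cast
        ring
    · refine ⟨P, M, c - q ^ M, by omega, ?_, fun y => ?_⟩
      · calc |c - q ^ M| ≤ |c| + q ^ M := by simpa using abs_sub c ((q : ℤ) ^ M)
          _ ≤ _ := by linarith
      · rw [affineRep_a_inv_apply, add_mul, hy]
        push_cast
        ring
    · refine ⟨P + 1, M, q * c, by omega, ?_, fun y => ?_⟩
      · calc |(q : ℤ) * c| = q * |c| := by rw [abs_mul, abs_of_nonneg (by omega)]
          _ ≤ q * (l.length * q ^ l.length) := by gcongr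
          _ = l.length * q ^ (l.length + 1) := by ring
          _ ≤ (l.length + 1) * q ^ (l.length + 1) := by linarith
      · rw [affineRep_t_apply, mul_assoc, hy]
        push_cast
        ring
    · refine ⟨P, M + 1, c, by omega, by linarith, fun y => ?_⟩
      rw [affineRep_t_inv_apply, ← hy]
      field_simp
      ring

end AffineRep

theorem le_of_mul_pow_eq_mul_pow {R : Type*} [CommMonoidWithZero R] [IsCancelMulZero R]
    {q N c : R} {M m : ℕ} (hq : q ≠ 0) (hN : ¬ q ∣ N) (h : N * q ^ M = c * q ^ m) : m ≤ M := by
  by_contra! hlt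
  obtain ⟨d, rfl⟩ := Nat.exists_eq_add_of_lt hlt
  have hcancel : N = c * q ^ d * q :=
    mul_right_cancel₀ (pow_ne_zero M hq) (by rw [h, pow_succ, pow_add]; ac_rfl)
  exact hN (hcancel ▸ dvd_mul_left q _)

theorem normalForm_bounds_of_list_prod {q : ℕ} (hq : 1 < q) {m n : ℕ} {N : ℤ}
    (hnf : m ≠ 0 → n ≠ 0 → ¬ (q : ℤ) ∣ N) (l : List (BS 1 q)) (hl : ∀ g ∈ l, g ∈ genSet 1 q)
    (hprod : l.prod = (BS.t 1 q)⁻¹ ^ m * BS.a 1 q ^ N * BS.t 1 q ^ n) :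
    m + n ≤ l.length ∧ |N| ≤ l.length * (q : ℤ) ^ (2 * l.length) := by
  have hq0 : q ≠ 0 := by omega
  obtain ⟨P, M, c, hPM, hc, hy⟩ := exists_affineRep_list_prod hq0 l hl
  have hcompare (y : ℚ) : (q ^ n * y + N) * q ^ M = (q ^ P * y + c) * q ^ m := by
    rw [← affineRep_normalForm hq0, ← hprod, ← hy]
    ring
  have hexp : P + m = n + M := by
    have hpow : ((q ^ (P + m) : ℕ) : ℚ) = (q ^ (n + M) : ℕ) := by
      push_cast [pow_add]
      linear_combination hcompare 0 - hcompare 1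
    exact Nat.pow_right_injective hq (Nat.cast_injective hpow)
  have hcoef : N * q ^ M = c * q ^ m := by
    have h0 := hcompare 0
    simp only [mul_zero, zero_add] at h0
    exact_mod_cast h0
  have hmM : m ≤ M := by
    rcases eq_or_ne m 0 with hm | hm
    · omega
    rcases eq_or_ne n 0 with hn | hn
    · omega
    exact le_of_mul_pow_eq_mul_pow (by exact_mod_cast hq0) (hnf hm hn) hcoef
  refine ⟨by omega, ?_⟩
  have hq1 : (1 : ℤ) ≤ q := by exact_mod_cast hq.le
  calc |N| ≤ |N| * q ^ M := le_mul_of_one_le_right (abs_nonneg N) (one_le_pow₀ hq1)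
    _ = |c| * q ^ m := by simpa [abs_mul] using congrArg abs hcoef
    _ ≤ (l.length * q ^ l.length) * q ^ l.length := by gcongr; omega
    _ = l.length * q ^ (2 * l.length) := by ring

theorem Real.log_abs_le_of_abs_le_mul_pow {x q : ℝ} {k j : ℕ} (hq : 1 ≤ q)
    (h : |x| ≤ k * q ^ j) : Real.log |x| ≤ j * Real.log q + k := by
  have hlogq : 0 ≤ Real.log q := Real.log_nonneg hq
  rcases eq_or_ne x 0 with rfl | hx
  · simp
    positivity
  have hk : (0 : ℝ) < k := by
    by_contra! hk
    have : (k : ℝ) * q ^ j ≤ 0 := mul_nonpos_of_nonpos_of_nonneg hk (by positivity)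
    exact hx (abs_nonpos_iff.mp (h.trans this))
  calc Real.log |x| ≤ Real.log (k * q ^ j) := Real.log_le_log (abs_pos.mpr hx) h
    _ = Real.log k + j * Real.log q := by
      rw [Real.log_mul hk.ne' (by positivity), Real.log_pow]
    _ ≤ j * Real.log q + k := by linarith [Real.log_le_self hk.le]

theorem stmt3_general (q : ℕ) (hq : 2 ≤ q) (m n : ℕ) (N : ℤ)
    (hnf : m ≠ 0 → n ≠ 0 → ¬ ((q : ℤ) ∣ N))
    (x : BS 1 q) (hx : x = (BS.t 1 q)⁻¹ ^ m * BS.a 1 q ^ N * BS.t 1 q ^ n)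
    (k : ℕ) (hk : k = wlen 1 q x) :
    m + n ≤ k ∧
    Real.log |(N : ℝ)| ≤ (2 * Real.log q + 1) * k ∧
    (m : ℝ) + n + Real.log |(N : ℝ)| ≤ (2 * Real.log q + 2) * (wlen 1 q x) := by
  obtain ⟨l, hlen, hl, hprod⟩ := exists_list_length_eq_wlen x
  obtain ⟨hmn, hNk⟩ := normalForm_bounds_of_list_prod hq hnf l hl (hprod.trans hx)
  rw [hlen, ← hk] at hmn hNk
  have hlog := Real.log_abs_le_of_abs_le_mul_pow (q := q) (by exact_mod_cast (by omega : 1 ≤ q))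
    (by exact_mod_cast hNk : |(N : ℝ)| ≤ k * (q : ℝ) ^ (2 * k))
  have hmn' : (m : ℝ) + n ≤ k := by exact_mod_cast hmn
  push_cast at hlog
  rw [← hk]
  exact ⟨hmn, by linarith, by linarith⟩

/-- In BS(1,q) with q ≥ 2, if x = t^{-m} a^N t^n in normal form, N ≠ 0 and k = ‖x‖,
then m + n ≤ k and log|N| ≤ (2 log q + 1)k; hence m + n + log|N| ≤ (2 log q + 2)‖x‖. -/
theorem stmt3 (q : ℕ) (hq : 2 ≤ q) (m n : ℕ) (N : ℤ) (hN : N ≠ 0)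
    (hnf : m ≠ 0 → n ≠ 0 → ¬ ((q : ℤ) ∣ N))
    (x : BS 1 q) (hx : x = (BS.t 1 q)⁻¹ ^ m * BS.a 1 q ^ N * BS.t 1 q ^ n)
    (k : ℕ) (hk : k = wlen 1 q x) :
    m + n ≤ k ∧
    Real.log |(N : ℝ)| ≤ (2 * Real.log q + 1) * k ∧
    (m : ℝ) + n + Real.log |(N : ℝ)| ≤ (2 * Real.log q + 2) * (wlen 1 q x) :=
  stmt3_general q hq m n N hnf x hx k hk
end

section
/- In BS(p,p) = ⟨a,t | t a^p t⁻¹ = a^p⟩ with p ≥ 1, if x has normal form w(a,t)·a^N where w is a freely reduced word over {a^j t^{±1} : 0 ≤ j < p} ending in t^{±1} (or empty), then the word length of x with respect to {a^{±1}, t^{±1}} satisfies (1/(2p))(|w| + |N|) ≤ ‖x‖ ≤ |w| + |N|. -/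
/-!
Map `BS(p,p)` to `F(ℤ/p) ⋊ ℤ`, sending `t` to the free generator `x₀` and `a` to the generator
of `ℤ`, which acts on `F(ℤ/p)` by shifting indices; the relator dies because shifting by `p` is
trivial. The normal form `w · a^N` goes to `(x_{c₁}^{±1} ⋯ x_{c_k}^{±1}, Σ j + N)`, where `k` is
the number of syllables of `w` and the `c_i` are partial sums of their exponents `j`; reducedness
of `w` makes this free word reduced. A generator changes the free length and the `ℤ`-coordinate
by at most one, so `‖x‖ ≥ k` and `‖x‖ ≥ |Σ j + N|`. As `|w| = Σ (j + 1) ≤ p k`, this gives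
`|w| + |N| ≤ 2p ‖x‖`. The upper bound is witnessed by the word `w · a^N` itself.
-/

section WordLength

variable {G : Type*}

/-- `wlen p q x` is, by definition, `sInf (wordLengths (genSet p q) x)`. -/
def wordLengths [Monoid G] (S : Set G) (x : G) : Set ℕ :=
  {n | ∃ l : List G, l.length = n ∧ (∀ g ∈ l, g ∈ S) ∧ l.prod = x}

section Monoid

variable [Monoid G] {S : Set G}

theorem zero_mem_wordLengths_one : 0 ∈ wordLengths S 1 :=
  ⟨[], rfl, by simp, rfl⟩

theorem one_mem_wordLengths_of_mem {g : G} (hg : g ∈ S) : 1 ∈ wordLengths S g :=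
  ⟨[g], rfl, by simpa using hg, by simp⟩

theorem add_mem_wordLengths_mul {x y : G} {m n : ℕ} (hm : m ∈ wordLengths S x)
    (hn : n ∈ wordLengths S y) : m + n ∈ wordLengths S (x * y) := by
  obtain ⟨l, rfl, hl, rfl⟩ := hm
  obtain ⟨l', rfl, hl', rfl⟩ := hn
  exact ⟨l ++ l', List.length_append, List.forall_mem_append.2 ⟨hl, hl'⟩, List.prod_append⟩

theorem sum_mem_wordLengths_prod {ι : Type*} (f : ι → G) (len : ι → ℕ) (L : List ι)
    (h : ∀ i ∈ L, len i ∈ wordLengths S (f i)) :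
    (L.map len).sum ∈ wordLengths S (L.map f).prod := by
  induction L with
  | nil => simpa using zero_mem_wordLengths_one (S := S)
  | cons i L ih =>
    rw [List.forall_mem_cons] at h
    simpa using add_mem_wordLengths_mul h.1 (ih h.2)

theorem mem_wordLengths_pow {g : G} (hg : g ∈ S) (k : ℕ) : k ∈ wordLengths S (g ^ k) := by
  induction k with
  | zero => simpa using zero_mem_wordLengths_one (S := S)
  | succ k ih =>
    rw [pow_succ]
    exact add_mem_wordLengths_mul ih (one_mem_wordLengths_of_mem hg)

theorem le_of_mem_wordLengths {f : G → ℕ} (hf₁ : f 1 = 0) (hmul : ∀ x y, f (x * y) ≤ f x + f y)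
    (hS : ∀ g ∈ S, f g ≤ 1) {x : G} {n : ℕ} (hn : n ∈ wordLengths S x) : f x ≤ n := by
  obtain ⟨l, rfl, hl, rfl⟩ := hn
  induction l with
  | nil => simp [hf₁]
  | cons g l ih =>
    rw [List.forall_mem_cons] at hl
    rw [List.prod_cons, List.length_cons]
    linarith [hmul g l.prod, hS g hl.1, ih hl.2]

end Monoid

theorem natAbs_mem_wordLengths_zpow [Group G] {S : Set G} {g : G} (hg : g ∈ S) (hg' : g⁻¹ ∈ S)
    (N : ℤ) : N.natAbs ∈ wordLengths S (g ^ N) := by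
  cases N with
  | ofNat k => simpa using mem_wordLengths_pow hg k
  | negSucc k => simpa [zpow_negSucc, ← inv_pow] using mem_wordLengths_pow hg' (k + 1)

end WordLength

namespace FreeGroup

variable {α β : Type*}

theorem IsReduced.map {f : α → β} (hf : Function.Injective f) {L : List (α × Bool)}
    (h : IsReduced L) : IsReduced (L.map fun l => (f l.1, l.2)) :=
  List.isChain_map_of_isChain _ (fun _ _ hab heq => hab (hf heq)) h

variable [DecidableEq α] [DecidableEq β]

theorem norm_map_le (f : α → β) (x : FreeGroup α) : (map f x).norm ≤ x.norm := by
  conv_lhs => rw [← mk_toWord (x := x), map.mk]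
  exact norm_mk_le.trans (by simp [norm])

theorem norm_freeGroupCongr (e : α ≃ β) (x : FreeGroup α) :
    (freeGroupCongr e x).norm = x.norm := by
  refine le_antisymm (norm_map_le e x) ?_
  simpa [map.comp] using norm_map_le e.symm (freeGroupCongr e x)

theorem IsReduced.norm_mk {L : List (α × Bool)} (h : IsReduced L) : (mk L).norm = L.length := by
  rw [norm, toWord_mk, h.reduce_eq]

end FreeGroup

namespace BS

open FreeGroup SemidirectProduct

theorem add_one_mem_wordLengths_syl (p q : ℕ) (s : ℕ × Bool) :
    s.1 + 1 ∈ wordLengths (genSet p q) (syl p q s) :=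
  add_mem_wordLengths_mul (mem_wordLengths_pow (by simp [genSet]) s.1)
    (one_mem_wordLengths_of_mem (by cases s.2 <;> simp [genSet]))

theorem sum_add_natAbs_mem_wordLengths (p q : ℕ) (w : List (ℕ × Bool)) (N : ℤ) :
    (w.map fun s => s.1 + 1).sum + N.natAbs ∈
      wordLengths (genSet p q) ((w.map (syl p q)).prod * BS.a p q ^ N) :=
  add_mem_wordLengths_mul
    (sum_mem_wordLengths_prod _ _ w fun s _ => add_one_mem_wordLengths_syl p q s)
    (natAbs_mem_wordLengths_zpow (by simp [genSet]) (by simp [genSet]) N)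

theorem sum_add_one_le_length_mul {p : ℕ} {w : List (ℕ × Bool)} (hw : ∀ s ∈ w, s.1 < p) :
    (w.map fun s => s.1 + 1).sum ≤ w.length * p := by
  have h := List.sum_le_card_nsmul (w.map fun s => s.1 + 1) p fun k hk => by
    obtain ⟨s, hs, rfl⟩ := List.mem_map.1 hk
    exact hw s hs
  rwa [List.length_map, smul_eq_mul] at h

def shift (p : ℕ) : Multiplicative ℤ →* MulAut (FreeGroup (ZMod p)) where
  toFun n := freeGroupCongr (Equiv.addLeft ((n.toAdd : ℤ) : ZMod p))
  map_one' := by ext; simp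
  map_mul' m n := by
    ext x
    simp [map.comp]

abbrev Model (p : ℕ) : Type := FreeGroup (ZMod p) ⋊[shift p] Multiplicative ℤ

theorem shift_apply_mk (p : ℕ) (n : Multiplicative ℤ) (L : List (ZMod p × Bool)) :
    shift p n (mk L) = mk (L.map fun l => ((n.toAdd : ZMod p) + l.1, l.2)) :=
  map.mk

theorem shift_apply_of (p : ℕ) (n : Multiplicative ℤ) (x : ZMod p) :
    shift p n (of x) = of ((n.toAdd : ZMod p) + x) :=
  map.of

theorem norm_shift_apply (p : ℕ) (n : Multiplicative ℤ) (v : FreeGroup (ZMod p)) :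
    (shift p n v).norm = v.norm :=
  norm_freeGroupCongr _ v

theorem shift_ofAdd_natCast_self (p : ℕ) : shift p (Multiplicative.ofAdd (p : ℤ)) = 1 := by
  ext; simp [shift]

def modelGen (p : ℕ) : Bool → Model p
  | true => inl (of 0)
  | false => inr (Multiplicative.ofAdd 1)

theorem lift_modelGen_bsRel (p : ℕ) : ∀ r ∈ bsRel p p, FreeGroup.lift (modelGen p) r = 1 := by
  rintro _ rfl
  have hpow :
      (inr (Multiplicative.ofAdd 1) : Model p) ^ p = inr (Multiplicative.ofAdd (p : ℤ)) := by
    rw [← map_pow, ← ofAdd_nsmul, nsmul_one]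
  have hcomm : Commute (inl (of 0)) (inr (Multiplicative.ofAdd (p : ℤ)) : Model p) := by
    ext <;> simp [mul_left, mul_right, shift_ofAdd_natCast_self]
  simp [modelGen, hpow, hcomm.eq]

def toModel (p : ℕ) : BS p p →* Model p := PresentedGroup.toGroup (lift_modelGen_bsRel p)

theorem toModel_a (p : ℕ) : toModel p (BS.a p p) = inr (Multiplicative.ofAdd 1) := rfl

theorem toModel_t (p : ℕ) : toModel p (BS.t p p) = inl (of 0) := rfl

theorem toModel_syl (p : ℕ) (s : ℕ × Bool) :
    toModel p (syl p p s) = ⟨mk [((s.1 : ZMod p), s.2)], Multiplicative.ofAdd (s.1 : ℤ)⟩ := by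
  have ha : toModel p (BS.a p p ^ s.1) = inr (Multiplicative.ofAdd (s.1 : ℤ)) := by
    rw [map_pow, toModel_a, ← map_pow, ← ofAdd_nsmul, nsmul_one]
  obtain ⟨j, _ | _⟩ := s <;> ext <;>
    simp [syl, ha, toModel_t, mul_left, mul_right, shift_apply_of] <;> rfl

def imageWord (p : ℕ) : List (ℕ × Bool) → List (ZMod p × Bool)
  | [] => []
  | s :: w => ((s.1 : ZMod p), s.2) :: (imageWord p w).map fun l => ((s.1 : ZMod p) + l.1, l.2)

theorem toModel_prod_syl (p : ℕ) (w : List (ℕ × Bool)) :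
    toModel p (w.map (syl p p)).prod =
      ⟨mk (imageWord p w), Multiplicative.ofAdd (((w.map fun s => s.1).sum : ℕ) : ℤ)⟩ := by
  induction w with
  | nil => rfl
  | cons s w ih =>
    rw [List.map_cons, List.prod_cons, _root_.map_mul, ih, toModel_syl]
    ext
    · simp [mul_left, shift_apply_mk, imageWord, mul_mk]
    · simp [mul_right, Function.comp_def]

theorem toModel_prod_syl_mul_zpow (p : ℕ) (w : List (ℕ × Bool)) (N : ℤ) :
    toModel p ((w.map (syl p p)).prod * BS.a p p ^ N) =
      ⟨mk (imageWord p w), Multiplicative.ofAdd ((((w.map fun s => s.1).sum : ℕ) : ℤ) + N)⟩ := by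
  rw [_root_.map_mul, toModel_prod_syl, map_zpow, toModel_a, ← map_zpow, ← ofAdd_zsmul, zsmul_one]
  ext
  · simp [mul_left]
  · simp [mul_right]

theorem length_imageWord (p : ℕ) (w : List (ℕ × Bool)) : (imageWord p w).length = w.length := by
  induction w with
  | nil => rfl
  | cons s w ih => simp [imageWord, ih]

theorem isReduced_imageWord (p : ℕ) {w : List (ℕ × Bool)} (hw : ∀ s ∈ w, s.1 < p)
    (hred : w.IsChain fun s s' => s'.1 = 0 → s'.2 = s.2) : IsReduced (imageWord p w) := by
  induction w with
  | nil => exact IsReduced.nil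
  | cons s w ih =>
    rw [List.forall_mem_cons] at hw
    have htail : IsReduced ((imageWord p w).map fun l => ((s.1 : ZMod p) + l.1, l.2)) :=
      (ih hw.2 hred.tail).map (add_right_injective _)
    cases w with
    | nil => exact IsReduced.singleton
    | cons s' w =>
      refine isReduced_cons_cons.2 ⟨fun h => ?_, htail⟩
      -- the indices of consecutive letters differ by `s'.1 < p`, so they only meet if `s'.1 = 0`
      have hs' : s'.1 = 0 := by
        simp only [left_eq_add] at h
        exact Nat.eq_zero_of_dvd_of_lt ((ZMod.natCast_eq_zero_iff _ _).1 h) (hw.2 s' (by simp))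
      exact ((List.isChain_cons_cons.1 hred).1 hs').symm

theorem norm_left_mul_le (p : ℕ) (x y : Model p) :
    (x * y).left.norm ≤ x.left.norm + y.left.norm := by
  rw [mul_left, ← norm_shift_apply p x.right y.left]
  exact norm_mul_le _ _

theorem norm_left_toModel_le {p n : ℕ} {x : BS p p} (hn : n ∈ wordLengths (genSet p p) x) :
    (toModel p x).left.norm ≤ n :=
  le_of_mem_wordLengths (f := fun x => (toModel p x).left.norm) (by simp)
    (fun x y => by simpa using norm_left_mul_le p _ _)
    (by rintro g (rfl | rfl | rfl | rfl) <;> simp [toModel_a, toModel_t]) hn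

theorem natAbs_right_toModel_le {p n : ℕ} {x : BS p p} (hn : n ∈ wordLengths (genSet p p) x) :
    (toModel p x).right.toAdd.natAbs ≤ n :=
  le_of_mem_wordLengths (f := fun x => (toModel p x).right.toAdd.natAbs) (by simp)
    (fun x y => by simpa [mul_right] using Int.natAbs_add_le _ _)
    (by rintro g (rfl | rfl | rfl | rfl) <;> simp [toModel_a, toModel_t]) hn

theorem length_le_of_mem_wordLengths {p n : ℕ} {w : List (ℕ × Bool)} (hw : ∀ s ∈ w, s.1 < p)
    (hred : w.IsChain fun s s' => s'.1 = 0 → s'.2 = s.2) {N : ℤ}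
    (hn : n ∈ wordLengths (genSet p p) ((w.map (syl p p)).prod * BS.a p p ^ N)) :
    w.length ≤ n := by
  simpa [toModel_prod_syl_mul_zpow, (isReduced_imageWord p hw hred).norm_mk,
    length_imageWord] using norm_left_toModel_le hn

theorem natAbs_sum_add_le_of_mem_wordLengths {p n : ℕ} {w : List (ℕ × Bool)} {N : ℤ}
    (hn : n ∈ wordLengths (genSet p p) ((w.map (syl p p)).prod * BS.a p p ^ N)) :
    ((((w.map fun s => s.1).sum : ℕ) : ℤ) + N).natAbs ≤ n := by
  have h := natAbs_right_toModel_le hn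
  rwa [toModel_prod_syl_mul_zpow, toAdd_ofAdd] at h

end BS

/-- In BS(p,p) with p ≥ 1, if x = w(a,t)·a^N with w a freely reduced word over
{a^j t^{±1} : 0 ≤ j < p}, then (1/(2p))(|w| + |N|) ≤ ‖x‖ ≤ |w| + |N|,
where |w| is the length of w in the letters a, t. -/
theorem stmt11 (p : ℕ) (hp : 1 ≤ p)
    (w : List (ℕ × Bool)) (hw : ∀ s ∈ w, s.1 < p)
    (hred : w.Chain' (fun s s' => s'.1 = 0 → s'.2 = s.2))
    (N : ℤ) (x : BS p p)
    (hx : x = (w.map (syl p p)).prod * BS.a p p ^ N) :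
    (1 / (2 * (p : ℝ))) * ((((w.map (fun s => s.1 + 1)).sum : ℕ) : ℝ) + |(N : ℝ)|)
        ≤ (wlen p p x : ℝ) ∧
    wlen p p x ≤ (w.map (fun s => s.1 + 1)).sum + N.natAbs := by
  have hword : _ ∈ wordLengths (genSet p p) x := hx ▸ BS.sum_add_natAbs_mem_wordLengths p p w N
  refine ⟨?_, Nat.sInf_le hword⟩
  obtain ⟨n, hn, hmin⟩ : ∃ n, wlen p p x = n ∧ n ∈ wordLengths (genSet p p) x :=
    ⟨_, rfl, Nat.sInf_mem ⟨_, hword⟩⟩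
  rw [hn]
  subst hx
  have hlen := BS.length_le_of_mem_wordLengths hw hred hmin
  have hexp := BS.natAbs_sum_add_le_of_mem_wordLengths hmin
  have hsum : (w.map fun s => s.1 + 1).sum = (w.map fun s => s.1).sum + w.length := by
    simp [List.sum_map_add]
  have hsyl := BS.sum_add_one_le_length_mul hw
  have key : (w.map fun s => s.1 + 1).sum + N.natAbs ≤ 2 * p * n := by
    have : N.natAbs ≤ n + (w.map fun s => s.1).sum := by omega
    nlinarith
  rw [one_div]
  refine inv_mul_le_of_le_mul₀ (by positivity) (by positivity) ?_
  calc (((w.map fun s => s.1 + 1).sum : ℕ) : ℝ) + |(N : ℝ)|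
      = (((w.map fun s => s.1 + 1).sum + N.natAbs : ℕ) : ℝ) := by
        rw [Nat.cast_add, Nat.cast_natAbs, Int.cast_abs]
    _ ≤ 2 * p * n := by exact_mod_cast key
end

section
/- In BS(p,q) with 1 ≤ p < q, if x has normal form w(a,t)·a^N then there are constants C₁ = 1/(q+1) and D₁ = log_{q/p}(2qp/(q−p)) such that C₁·|w| ≤ ‖x‖ + D₁ and C₁·log_{q/p}(|N|+1) ≤ ‖x‖ + D₁; more precisely |w| ≤ q·‖x‖ and log_{q/p}(|N|+1) ≤ ‖x‖ + log_{q/p}(2qp/(q−p)). -/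
namespace BaumslagSolitar

section NormalForm

variable (d : Bool → ℕ)

def IsNormalWord (w : List (ℕ × Bool)) : Prop :=
  (∀ s ∈ w, s.1 < d s.2) ∧ w.IsChain fun s s' => s'.1 = 0 → s'.2 = s.2

abbrev NormalForm : Type := {v : List (ℕ × Bool) × ℤ // IsNormalWord d v.1}

/-- Right multiplication of `w · a^N` by `t` (`b = true`) or `t⁻¹` (`b = false`), using
`a^(d b) t^(±1) = t^(±1) a^(d !b)`. -/
def mulT (b : Bool) (v : List (ℕ × Bool) × ℤ) : List (ℕ × Bool) × ℤ :=
  if v.2 % d b = 0 ∧ v.1.getLast?.map Prod.snd = some (!b) then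
    (v.1.dropLast, ((v.1.getLast?.map Prod.fst).getD 0 : ℕ) + d (!b) * (v.2 / d b))
  else (v.1 ++ [((v.2 % d b).toNat, b)], d (!b) * (v.2 / d b))

variable {d}

lemma mulT_concat_of_emod_eq_zero (b : Bool) (u : List (ℕ × Bool)) (j : ℕ) {N : ℤ}
    (hN : N % d b = 0) : mulT d b (u ++ [(j, !b)], N) = (u, j + d (!b) * (N / d b)) := by
  simp [mulT, hN]

lemma mulT_eq_append {b : Bool} {v : List (ℕ × Bool) × ℤ}
    (h : v.2 % d b = 0 → ∀ s ∈ v.1.getLast?, s.2 = b) :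
    mulT d b v = (v.1 ++ [((v.2 % d b).toNat, b)], d (!b) * (v.2 / d b)) := by
  refine if_neg fun ⟨hN, hlast⟩ => ?_
  obtain ⟨s, hs, hsb⟩ := Option.map_eq_some_iff.mp hlast
  simpa [hsb] using h hN s hs

lemma mulT_cases (b : Bool) (v : List (ℕ × Bool) × ℤ) :
    (∃ (u : List (ℕ × Bool)) (j : ℕ), v.1 = u ++ [(j, !b)] ∧ v.2 % d b = 0 ∧
      mulT d b v = (u, j + d (!b) * (v.2 / d b))) ∨
    ((v.2 % d b = 0 → ∀ s ∈ v.1.getLast?, s.2 = b) ∧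
      mulT d b v = (v.1 ++ [((v.2 % d b).toNat, b)], d (!b) * (v.2 / d b))) := by
  obtain ⟨w, N⟩ := v
  by_cases h : N % d b = 0 → ∀ s ∈ w.getLast?, s.2 = b
  · exact .inr ⟨h, mulT_eq_append h⟩
  push Not at h
  obtain ⟨hN, ⟨j, b'⟩, hlast, hb'⟩ := h
  obtain rfl : b' = !b := Bool.eq_not_iff.mpr hb'
  obtain ⟨u, rfl⟩ := List.getLast?_eq_some_iff.mp hlast
  exact .inl ⟨u, j, rfl, hN, mulT_concat_of_emod_eq_zero b u j hN⟩

lemma IsNormalWord.left_of_append {u u' : List (ℕ × Bool)} (h : IsNormalWord d (u ++ u')) :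
    IsNormalWord d u :=
  ⟨fun s hs => h.1 s (List.mem_append_left u' hs), h.2.left_of_append⟩

lemma isNormalWord_concat {w : List (ℕ × Bool)} {j : ℕ} {b : Bool} :
    IsNormalWord d (w ++ [(j, b)]) ↔
      IsNormalWord d w ∧ j < d b ∧ (j = 0 → ∀ s ∈ w.getLast?, s.2 = b) := by
  simp only [IsNormalWord, List.mem_append, List.mem_singleton, List.isChain_append,
    List.isChain_singleton, List.head?_cons, Option.mem_some_iff, forall_eq, or_imp, forall_and,
    true_and]
  grind

lemma isNormalWord_mulT {b : Bool} (hd : 0 < d b) {v : List (ℕ × Bool) × ℤ}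
    (hv : IsNormalWord d v.1) : IsNormalWord d (mulT d b v).1 := by
  rcases mulT_cases b v with ⟨u, j, hu, -, he⟩ | ⟨hlast, he⟩ <;> rw [he]
  · exact (hu ▸ hv).left_of_append
  · have hr := Int.emod_nonneg v.2 (b := d b) (by omega)
    have hr' := Int.emod_lt_of_pos v.2 (b := d b) (by omega)
    exact isNormalWord_concat.mpr ⟨hv, by omega, fun h0 => hlast (by omega)⟩

/-- For `k = 0` this inverts `mulT d b`; for `k = 1` it is the defining relation. -/
lemma mulT_not_mulT (hd : ∀ b, 0 < d b) (b : Bool) {v : List (ℕ × Bool) × ℤ}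
    (hv : IsNormalWord d v.1) (k : ℤ) :
    mulT d (!b) ((mulT d b v).1, (mulT d b v).2 + d (!b) * k) = (v.1, v.2 + d b * k) := by
  obtain ⟨w, N⟩ := v
  have hdb : (0 : ℤ) < d b := by exact_mod_cast hd b
  have hdnb : (0 : ℤ) < d (!b) := by exact_mod_cast hd (!b)
  rcases mulT_cases b (w, N) with ⟨u, j, rfl, hN, he⟩ | ⟨-, he⟩ <;> rw [he]
  · obtain ⟨-, hj, hj0⟩ := isNormalWord_concat.mp hv
    obtain ⟨hq, hr⟩ := (Int.ediv_emod_unique (a := j + d (!b) * (N / d b) + d (!b) * k)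
      (r := j) (q := N / d b + k) hdnb).mpr ⟨by ring, by positivity, by omega⟩
    rw [mulT_eq_append fun h0 => hj0 (by rw [hr] at h0; exact_mod_cast h0), hq, hr,
      Bool.not_not, mul_add, Int.mul_ediv_cancel_of_emod_eq_zero hN]
    simp
  · have hm : (d (!b) * (N / d b) + d (!b) * k) % d (!b) = 0 := by
      rw [← mul_add, Int.mul_emod_right]
    have := mulT_concat_of_emod_eq_zero (!b) w (N % d b).toNat hm
    rw [Bool.not_not] at this
    rw [this, ← mul_add, Int.mul_ediv_cancel_left _ hdnb.ne',
      Int.toNat_of_nonneg (Int.emod_nonneg _ hdb.ne')]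
    simp only [Prod.mk.injEq, true_and]
    linear_combination Int.mul_ediv_add_emod N (d b)

lemma mulT_of_isNormalWord_concat {w : List (ℕ × Bool)} {j : ℕ} {b : Bool}
    (h : IsNormalWord d (w ++ [(j, b)])) : mulT d b (w, j) = (w ++ [(j, b)], 0) := by
  obtain ⟨-, hj, hj0⟩ := isNormalWord_concat.mp h
  obtain ⟨hq, hr⟩ := (Int.ediv_emod_unique (a := j) (r := j) (q := 0) (b := d b)
    (by omega)).mpr ⟨by ring, by positivity, by omega⟩
  rw [mulT_eq_append fun h0 => hj0 (by simp only [hr] at h0; exact_mod_cast h0)]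
  simp [hq, hr]

def sylLength (w : List (ℕ × Bool)) : ℕ := (w.map fun s => s.1 + 1).sum

@[simp]
lemma sylLength_nil : sylLength [] = 0 := rfl

lemma sylLength_concat (w : List (ℕ × Bool)) (s : ℕ × Bool) :
    sylLength (w ++ [s]) = sylLength w + (s.1 + 1) := by
  simp [sylLength]

lemma sylLength_mulT_le {b : Bool} (hd : 0 < d b) (v : List (ℕ × Bool) × ℤ) :
    sylLength (mulT d b v).1 ≤ sylLength v.1 + d b := by
  obtain ⟨w, N⟩ := v
  rcases mulT_cases b (w, N) with ⟨u, j, rfl, -, he⟩ | ⟨-, he⟩ <;>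
    rw [he] <;> simp only [sylLength_concat]
  · omega
  · have := Int.emod_lt_of_pos N (b := d b) (by omega)
    omega

lemma abs_mulT_le {b : Bool} (hd : 0 < d b) {v : List (ℕ × Bool) × ℤ} (hv : IsNormalWord d v.1) :
    d b * |(mulT d b v).2| ≤ d (!b) * |v.2| + d b * d (!b) := by
  suffices |(d b : ℤ) * (mulT d b v).2| ≤ d (!b) * |v.2| + d b * d (!b) by
    rwa [abs_mul, Nat.abs_cast] at this
  obtain ⟨w, N⟩ := v
  rcases mulT_cases b (w, N) with ⟨u, j, rfl, hN, he⟩ | ⟨-, he⟩ <;> rw [he]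
  · have hj := (isNormalWord_concat.mp hv).2.1
    have hNq : (d b : ℤ) * (N / d b) = N := Int.mul_ediv_cancel_of_emod_eq_zero hN
    calc |(d b : ℤ) * (j + d (!b) * (N / d b))| = |d b * j + d (!b) * N| := by
          congr 1; linear_combination (d (!b) : ℤ) * hNq
      _ ≤ |(d b : ℤ) * j| + |d (!b) * N| := abs_add_le _ _
      _ ≤ d (!b) * |N| + d b * d (!b) := by
          rw [abs_mul, abs_mul, abs_of_nonneg (by positivity : (0 : ℤ) ≤ d b),
            abs_of_nonneg (by positivity : (0 : ℤ) ≤ d (!b)), Nat.abs_cast]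
          nlinarith
  · have hr := Int.emod_nonneg N (b := d b) (by omega)
    have hr' := Int.emod_lt_of_pos N (b := d b) (by omega)
    have hNq := Int.mul_ediv_add_emod N (d b)
    calc |(d b : ℤ) * (d (!b) * (N / d b))| = |(d (!b) : ℤ) * (N - N % d b)| := by
          congr 1; linear_combination (d (!b) : ℤ) * hNq
      _ = d (!b) * |N - N % d b| := by rw [abs_mul, Nat.abs_cast]
      _ ≤ d (!b) * (|N| + d b) := by
          gcongr
          exact (abs_sub _ _).trans (by rw [abs_of_nonneg hr]; omega)
      _ = d (!b) * |N| + d b * d (!b) := by ring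

variable (d) in
def shiftPerm : Equiv.Perm (NormalForm d) where
  toFun v := ⟨(v.1.1, v.1.2 + 1), v.2⟩
  invFun v := ⟨(v.1.1, v.1.2 - 1), v.2⟩
  left_inv v := Subtype.ext (by simp)
  right_inv v := Subtype.ext (by simp)

lemma shiftPerm_apply_coe (v : NormalForm d) : (shiftPerm d v).1 = (v.1.1, v.1.2 + 1) := rfl

lemma shiftPerm_inv_apply_coe (v : NormalForm d) :
    ((shiftPerm d)⁻¹ v).1 = (v.1.1, v.1.2 - 1) := rfl

lemma shiftPerm_zpow_apply (k : ℤ) (v : NormalForm d) :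
    ((shiftPerm d ^ k) v).1 = (v.1.1, v.1.2 + k) := by
  induction k using Int.induction_on generalizing v with
  | zero => simp
  | succ k ih =>
    rw [zpow_add_one, Equiv.Perm.mul_apply, ih, shiftPerm_apply_coe]
    exact Prod.ext rfl (by push_cast; ring)
  | pred k ih =>
    rw [zpow_sub_one, Equiv.Perm.mul_apply, ih, shiftPerm_inv_apply_coe]
    exact Prod.ext rfl (by ring)

def tPerm (hd : ∀ b, 0 < d b) (b : Bool) : Equiv.Perm (NormalForm d) where
  toFun v := ⟨mulT d b v.1, isNormalWord_mulT (hd b) v.2⟩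
  invFun v := ⟨mulT d (!b) v.1, isNormalWord_mulT (hd (!b)) v.2⟩
  left_inv v := Subtype.ext (by simpa using mulT_not_mulT hd b v.2 0)
  right_inv v := Subtype.ext (by simpa using mulT_not_mulT hd (!b) v.2 0)

lemma tPerm_apply_coe (hd : ∀ b, 0 < d b) (b : Bool) (v : NormalForm d) :
    (tPerm hd b v).1 = mulT d b v.1 := rfl

lemma tPerm_inv_apply_coe (hd : ∀ b, 0 < d b) (b : Bool) (v : NormalForm d) :
    ((tPerm hd b)⁻¹ v).1 = mulT d (!b) v.1 := rfl

instance : One (NormalForm d) := ⟨⟨([], 0), by simp [IsNormalWord]⟩⟩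

lemma coe_one : ((1 : NormalForm d) : List (ℕ × Bool) × ℤ) = ([], 0) := rfl

end NormalForm

open MulOpposite

variable {p q : ℕ}

def sylBound (p q : ℕ) (b : Bool) : ℕ := if b then q else p

lemma sylBound_pos (hp : 0 < p) (hq : 0 < q) (b : Bool) : 0 < sylBound p q b := by
  cases b <;> assumption

lemma bsRel_lift_eq_one (hp : 0 < p) (hq : 0 < q) :
    ∀ r ∈ bsRel p q, FreeGroup.lift (fun x : Bool =>
      op (if x then tPerm (sylBound_pos hp hq) true else shiftPerm (sylBound p q))) r = 1 := by
  rintro r rfl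
  simp only [map_mul, map_pow, map_inv, FreeGroup.lift_apply_of, if_true, Bool.false_eq_true,
    if_false, ← op_pow, ← op_inv, ← op_mul, op_eq_one_iff, inv_mul_eq_one]
  refine Equiv.ext fun v => Subtype.ext ?_
  have := mulT_not_mulT (sylBound_pos hp hq) true v.2 1
  simp only [Equiv.Perm.mul_apply, tPerm_inv_apply_coe, ← zpow_natCast, shiftPerm_zpow_apply,
    tPerm_apply_coe]
  simpa [sylBound] using this.symm

def toPerm (hp : 0 < p) (hq : 0 < q) : BS p q →* (Equiv.Perm (NormalForm (sylBound p q)))ᵐᵒᵖ :=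
  PresentedGroup.toGroup (bsRel_lift_eq_one hp hq)

section Action

variable (hp : 0 < p) (hq : 0 < q)

/-- `act x v` is the normal form of `v · x`. -/
def act (x : BS p q) (v : NormalForm (sylBound p q)) : NormalForm (sylBound p q) :=
  (toPerm hp hq x).unop v

lemma act_mul (x y : BS p q) (v : NormalForm (sylBound p q)) :
    act hp hq (x * y) v = act hp hq y (act hp hq x v) := by
  simp [act]

lemma act_a_zpow_coe (k : ℤ) (v : NormalForm (sylBound p q)) :
    (act hp hq (BS.a p q ^ k) v).1 = (v.1.1, v.1.2 + k) := by
  simp [act, toPerm, BS.a, ← op_zpow, shiftPerm_zpow_apply]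

lemma act_t_coe (b : Bool) (v : NormalForm (sylBound p q)) :
    (act hp hq (if b then BS.t p q else (BS.t p q)⁻¹) v).1 = mulT (sylBound p q) b v.1 := by
  cases b <;> simp [act, toPerm, BS.t] <;> rfl

lemma act_syl_prod_coe {w : List (ℕ × Bool)} (hw : IsNormalWord (sylBound p q) w) :
    (act hp hq (w.map (syl p q)).prod 1).1 = (w, 0) := by
  induction w using List.reverseRecOn with
  | nil => simp [act]; rfl
  | append_singleton w s ih =>
    rw [List.map_append, List.prod_append, act_mul, List.map_singleton, List.prod_singleton, syl,
      act_mul, act_t_coe, ← zpow_natCast, act_a_zpow_coe, ih hw.left_of_append, zero_add]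
    exact mulT_of_isNormalWord_concat hw

lemma act_normalForm_coe {w : List (ℕ × Bool)} (hw : IsNormalWord (sylBound p q) w) (N : ℤ) :
    (act hp hq ((w.map (syl p q)).prod * BS.a p q ^ N) 1).1 = (w, N) := by
  rw [act_mul, act_a_zpow_coe, act_syl_prod_coe hp hq hw, zero_add]

lemma eq_a_zpow_or_t_of_mem_genSet {g : BS p q} (hg : g ∈ genSet p q) :
    (∃ k : ℤ, |k| = 1 ∧ g = BS.a p q ^ k) ∨
      ∃ b : Bool, g = if b then BS.t p q else (BS.t p q)⁻¹ := by
  rcases hg with rfl | rfl | rfl | rfl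
  · exact .inl ⟨1, by simp⟩
  · exact .inl ⟨-1, by simp⟩
  · exact .inr ⟨true, rfl⟩
  · exact .inr ⟨false, rfl⟩

lemma sylLength_act_le (hpq : p ≤ q) {g : BS p q} (hg : g ∈ genSet p q)
    (v : NormalForm (sylBound p q)) : sylLength (act hp hq g v).1.1 ≤ sylLength v.1.1 + q := by
  rcases eq_a_zpow_or_t_of_mem_genSet hg with ⟨k, -, rfl⟩ | ⟨b, rfl⟩
  · simp [act_a_zpow_coe]
  · rw [act_t_coe]
    refine (sylLength_mulT_le (sylBound_pos hp hq b) v.1).trans ?_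
    cases b <;> simp [sylBound, hpq]

lemma abs_act_le (hpq : p ≤ q) {g : BS p q} (hg : g ∈ genSet p q)
    (v : NormalForm (sylBound p q)) :
    p * |(act hp hq g v).1.2| ≤ q * |v.1.2| + p * q := by
  rcases eq_a_zpow_or_t_of_mem_genSet hg with ⟨k, hk, rfl⟩ | ⟨b, rfl⟩
  · rw [act_a_zpow_coe]
    have := abs_add_le v.1.2 k
    have : (p : ℤ) ≤ q := by exact_mod_cast hpq
    nlinarith [abs_nonneg v.1.2]
  · rw [act_t_coe]
    have h := abs_mulT_le (sylBound_pos hp hq b) v.2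
    cases b
    · simpa [sylBound] using h
    · simp only [sylBound, if_true, Bool.not_true, Bool.false_eq_true, if_false] at h
      have : (p : ℤ) ≤ q := by exact_mod_cast hpq
      nlinarith [abs_nonneg v.1.2, abs_nonneg (mulT (sylBound p q) true v.1).2]

lemma sylLength_act_prod_le (hpq : p ≤ q) {l : List (BS p q)} (hl : ∀ g ∈ l, g ∈ genSet p q)
    (v : NormalForm (sylBound p q)) :
    sylLength (act hp hq l.prod v).1.1 ≤ sylLength v.1.1 + q * l.length := by
  induction l generalizing v with
  | nil => simp [act]
  | cons g l ih =>
    rw [List.prod_cons, act_mul, List.length_cons, mul_add_one]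
    have hg := sylLength_act_le hp hq hpq (hl g List.mem_cons_self) v
    have hl' := ih (fun g' hg' => hl g' (List.mem_cons_of_mem g hg')) (act hp hq g v)
    omega

lemma abs_act_add_le (hpq : p ≤ q) {c : ℝ} (hc : p * q ≤ (q - p) * c) {g : BS p q}
    (hg : g ∈ genSet p q) (v : NormalForm (sylBound p q)) :
    |((act hp hq g v).1.2 : ℝ)| + c ≤ q / p * (|(v.1.2 : ℝ)| + c) := by
  have h : (p : ℝ) * |((act hp hq g v).1.2 : ℝ)| ≤ q * |(v.1.2 : ℝ)| + p * q := by
    exact_mod_cast abs_act_le hp hq hpq hg v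
  rw [div_mul_eq_mul_div, le_div_iff₀ (by exact_mod_cast hp)]
  linarith

lemma abs_act_prod_add_le (hpq : p ≤ q) {c : ℝ} (hc : p * q ≤ (q - p) * c)
    {l : List (BS p q)} (hl : ∀ g ∈ l, g ∈ genSet p q) (v : NormalForm (sylBound p q)) :
    |((act hp hq l.prod v).1.2 : ℝ)| + c ≤ (q / p) ^ l.length * (|(v.1.2 : ℝ)| + c) := by
  induction l generalizing v with
  | nil => simp [act]
  | cons g l ih =>
    rw [List.prod_cons, act_mul, List.length_cons, pow_succ, mul_assoc]
    refine (ih (fun g' hg' => hl g' (List.mem_cons_of_mem g hg')) (act hp hq g v)).trans ?_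
    gcongr
    exact abs_act_add_le hp hq hpq hc (hl g List.mem_cons_self) v

end Action

lemma exists_list_length_eq_wlen (x : BS p q) :
    ∃ l : List (BS p q), l.length = wlen p q x ∧ (∀ g ∈ l, g ∈ genSet p q) ∧ l.prod = x := by
  have hgen : Submonoid.closure (genSet p q) = ⊤ := by
    have hS : Set.range PresentedGroup.of ∪ (Set.range PresentedGroup.of)⁻¹ = genSet p q := by
      ext g
      simp [genSet, BS.a, BS.t]
      tauto
    rw [← hS, ← Subgroup.closure_toSubmonoid, PresentedGroup.closure_range_of,
      Subgroup.top_toSubmonoid]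
  obtain ⟨l, hl, rfl⟩ := Submonoid.exists_list_of_mem_closure (hgen ▸ Submonoid.mem_top x)
  exact Nat.sInf_mem (s := {n | ∃ l' : List (BS p q), l'.length = n ∧ _ ∧ _})
    ⟨l.length, l, rfl, hl, rfl⟩

lemma sylLength_le_mul_wlen (hp : 0 < p) (hpq : p ≤ q) {w : List (ℕ × Bool)}
    (hw : IsNormalWord (sylBound p q) w) (N : ℤ) :
    sylLength w ≤ q * wlen p q ((w.map (syl p q)).prod * BS.a p q ^ N) := by
  obtain ⟨l, hlen, hl, hlx⟩ := exists_list_length_eq_wlen ((w.map (syl p q)).prod * BS.a p q ^ N)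
  have h := sylLength_act_prod_le hp (hp.trans_le hpq) hpq hl 1
  rw [hlx, act_normalForm_coe _ _ hw, coe_one, hlen] at h
  simpa using h

lemma abs_add_le_pow_wlen_mul (hp : 0 < p) (hpq : p ≤ q) {c : ℝ} (hc : p * q ≤ (q - p) * c)
    {w : List (ℕ × Bool)} (hw : IsNormalWord (sylBound p q) w) (N : ℤ) :
    |(N : ℝ)| + c ≤ (q / p) ^ wlen p q ((w.map (syl p q)).prod * BS.a p q ^ N) * c := by
  obtain ⟨l, hlen, hl, hlx⟩ := exists_list_length_eq_wlen ((w.map (syl p q)).prod * BS.a p q ^ N)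
  have h := abs_act_prod_add_le hp (hp.trans_le hpq) hpq hc hl 1
  rwa [hlx, act_normalForm_coe _ _ hw, coe_one, hlen, Int.cast_zero, abs_zero, zero_add] at h

end BaumslagSolitar

lemma Real.logb_le_add_logb_of_le_pow_mul {r y C : ℝ} {n : ℕ} (hr : 1 < r) (hy : 0 < y)
    (hC : 0 < C) (h : y ≤ r ^ n * C) : Real.logb r y ≤ n + Real.logb r C := by
  have hrn : 0 < r ^ n := pow_pos (by linarith) n
  calc Real.logb r y ≤ Real.logb r (r ^ n * C) := (Real.logb_le_logb hr hy (by positivity)).mpr h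
    _ = n + Real.logb r C := by
      rw [Real.logb_mul hrn.ne' hC.ne', Real.logb_pow, Real.logb_self_eq_one hr, mul_one]

open BaumslagSolitar

/-- In BS(p,q), 1 ≤ p < q: if x = w(a,t)·a^N in Britton normal form (w freely
reduced over {a^j t : 0 ≤ j < q} ∪ {a^j t⁻¹ : 0 ≤ j < p}), then with
C₁ = 1/(q+1) and D₁ = log_{q/p}(2qp/(q−p)) we have C₁|w| ≤ ‖x‖ + D₁ and
C₁·log_{q/p}(|N|+1) ≤ ‖x‖ + D₁; more precisely |w| ≤ q‖x‖ and
log_{q/p}(|N|+1) ≤ ‖x‖ + log_{q/p}(2qp/(q−p)). -/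
theorem stmt13 (p q : ℕ) (hp : 1 ≤ p) (hpq : p < q)
    (w : List (ℕ × Bool)) (hw : ∀ s ∈ w, s.1 < if s.2 then q else p)
    (hred : w.Chain' (fun s s' => s'.1 = 0 → s'.2 = s.2))
    (N : ℤ) (x : BS p q)
    (hx : x = (w.map (syl p q)).prod * BS.a p q ^ N) :
    (1 / ((q : ℝ) + 1)) * (((w.map (fun s => s.1 + 1)).sum : ℕ) : ℝ)
        ≤ (wlen p q x : ℝ) + Real.logb ((q : ℝ) / p) (2 * q * p / ((q : ℝ) - p)) ∧
    (1 / ((q : ℝ) + 1)) * Real.logb ((q : ℝ) / p) (|(N : ℝ)| + 1)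
        ≤ (wlen p q x : ℝ) + Real.logb ((q : ℝ) / p) (2 * q * p / ((q : ℝ) - p)) ∧
    ((((w.map (fun s => s.1 + 1)).sum : ℕ) : ℝ) ≤ (q : ℝ) * (wlen p q x : ℝ)) ∧
    Real.logb ((q : ℝ) / p) (|(N : ℝ)| + 1)
        ≤ (wlen p q x : ℝ) + Real.logb ((q : ℝ) / p) (2 * q * p / ((q : ℝ) - p)) := by
  have hqp : (0 : ℝ) < q - p := sub_pos.mpr (by exact_mod_cast hpq)
  have hp1 : (1 : ℝ) ≤ p := by exact_mod_cast hp
  have hc : (p : ℝ) * q ≤ (q - p) * (2 * q * p / (q - p)) := by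
    rw [mul_div_cancel₀ _ hqp.ne']; nlinarith
  have hc1 : (1 : ℝ) ≤ 2 * q * p / (q - p) := by rw [le_div_iff₀ hqp]; nlinarith
  have hr : (1 : ℝ) < q / p := (one_lt_div (by positivity)).mpr (by exact_mod_cast hpq)
  have hLen : (((w.map (fun s => s.1 + 1)).sum : ℕ) : ℝ) ≤ q * wlen p q x := by
    exact_mod_cast hx ▸ sylLength_le_mul_wlen hp hpq.le ⟨hw, hred⟩ N
  have hN := hx ▸ abs_add_le_pow_wlen_mul hp hpq.le hc ⟨hw, hred⟩ N
  have hLog : Real.logb (q / p) (|(N : ℝ)| + 1)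
      ≤ wlen p q x + Real.logb (q / p) (2 * q * p / (q - p)) :=
    Real.logb_le_add_logb_of_le_pow_mul hr (by positivity) (by positivity) (by linarith)
  have hD : 0 ≤ Real.logb (q / p) (2 * q * p / (q - p)) := Real.logb_nonneg hr hc1
  have hLog0 : 0 ≤ Real.logb (q / p) (|(N : ℝ)| + 1) :=
    Real.logb_nonneg hr (by linarith [abs_nonneg (N : ℝ)])
  refine ⟨?_, (mul_le_of_le_one_left hLog0 ?_).trans hLog, hLen, hLog⟩
  · rw [div_mul_eq_mul_div, one_mul, div_le_iff₀ (by positivity)]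
    nlinarith [hLen]
  · rw [div_le_one (by positivity)]
    linarith
end

section
/- The polynomial 1 − z − 4z² has a root r ≈ 0.39039 in (0, 1/2), and 1/r = (1+√17)/2 ≈ 2.5616; consequently the dominant singularity of (1+z)²(1−2z)(1+z+2z³)/((1−z)(1−z−4z²)(1−z−2z²−2z³)) is the smallest positive root of 1 − z − 4z², i.e. the smallest positive root of 1−z−4z² is smaller than every positive root of (1−z)(1−z−2z²−2z³) and smaller than the moduli of all other roots of the denominator. -/
/-!
Since 1 − z − 4z² = −4(z − r)(z + r + 1/4) for r = (√17 − 1)/8, the only other root of the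
quadratic is −(r + 1/4), of modulus larger than r; the root 1 of 1 − z is far away; and every root
of 1 − z − 2z² − 2z³ has modulus above 2/5 > r, because |z| + 2|z|² + 2|z|³ < 1 for |z| ≤ 2/5.
-/

lemma four_lt_sqrt_seventeen : 4 < √17 :=
  (Real.lt_sqrt (by norm_num)).mpr (by norm_num)

lemma sqrt_seventeen_lt : √17 < 21 / 5 :=
  (Real.sqrt_lt' (by norm_num)).mpr (by norm_num)

lemma eq_or_eq_neg_of_one_sub_sub_four_mul_sq_eq_zero
    {K : Type*} [Field K] [CharZero K] {r z : K} (hr : 1 - r - 4 * r ^ 2 = 0)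
    (hz : 1 - z - 4 * z ^ 2 = 0) : z = r ∨ z = -(r + 1 / 4) := by
  have hfactor : (z - r) * (z + (r + 1 / 4)) = 0 := by
    linear_combination hr / 4 - hz / 4
  rcases mul_eq_zero.mp hfactor with h | h
  · exact .inl (sub_eq_zero.mp h)
  · exact .inr (eq_neg_of_add_eq_zero_left h)

lemma two_fifths_lt_norm_of_one_sub_sub_two_mul_sq_sub_two_mul_cube_eq_zero
    {𝕜 : Type*} [RCLike 𝕜] {z : 𝕜} (hz : 1 - z - 2 * z ^ 2 - 2 * z ^ 3 = 0) :
    2 / 5 < ‖z‖ := by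
  have hone : (1 : ℝ) ≤ ‖z‖ + 2 * ‖z‖ ^ 2 + 2 * ‖z‖ ^ 3 :=
    calc (1 : ℝ) = ‖z + 2 * z ^ 2 + 2 * z ^ 3‖ := by
          rw [← norm_one (α := 𝕜)]; congr 1; linear_combination hz
      _ ≤ ‖z‖ + ‖2 * z ^ 2‖ + ‖2 * z ^ 3‖ := norm_add₃_le
      _ ≤ ‖z‖ + 2 * ‖z‖ ^ 2 + 2 * ‖z‖ ^ 3 := by
          simp only [norm_mul, norm_pow, RCLike.norm_ofNat, le_refl]
  by_contra! hsmall
  nlinarith [norm_nonneg z, mul_nonneg (norm_nonneg z) (norm_nonneg z)]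

/-- The polynomial 1 − z − 4z² has smallest positive root r = (√17 − 1)/8, with
0 < r < 1/2 and 1/r = (1+√17)/2; and r is smaller than the modulus of every
other root of the denominator (1−z)(1−z−4z²)(1−z−2z²−2z³), so it is the
dominant singularity of the growth series of BS(3,3). -/
theorem stmt17 :
    let r : ℝ := (Real.sqrt 17 - 1) / 8
    (1 - r - 4 * r ^ 2 = 0) ∧ (0 < r ∧ r < 1 / 2) ∧
    r⁻¹ = (1 + Real.sqrt 17) / 2 ∧
    (∀ x : ℝ, 0 < x → 1 - x - 4 * x ^ 2 = 0 → r ≤ x) ∧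
    (∀ z : ℂ, (1 - z) * (1 - z - 4 * z ^ 2) * (1 - z - 2 * z ^ 2 - 2 * z ^ 3) = 0 →
      z ≠ (r : ℂ) → r < ‖z‖) := by
  intro r
  have hsq : √17 ^ 2 = 17 := Real.sq_sqrt (by norm_num)
  have hlower := four_lt_sqrt_seventeen
  have hupper := sqrt_seventeen_lt
  have hroot : 1 - r - 4 * r ^ 2 = 0 := by linear_combination (-1 / 16 : ℝ) * hsq
  have hpos : 0 < r := by simp only [r]; linarith
  have hlt : r < 2 / 5 := by simp only [r]; linarith
  refine ⟨hroot, ⟨hpos, by linarith⟩,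
    inv_eq_of_mul_eq_one_right (by linear_combination (1 / 16 : ℝ) * hsq), ?_, ?_⟩
  · intro x hx hxroot
    rcases eq_or_eq_neg_of_one_sub_sub_four_mul_sq_eq_zero hroot hxroot with rfl | rfl <;>
      linarith
  · intro z hz hzr
    rcases mul_eq_zero.mp hz with hz | hcubic
    · rcases mul_eq_zero.mp hz with hone | hquad
      · rw [← sub_eq_zero.mp hone, norm_one]
        linarith
      · have hrootC : 1 - (r : ℂ) - 4 * (r : ℂ) ^ 2 = 0 := by exact_mod_cast hroot
        rcases eq_or_eq_neg_of_one_sub_sub_four_mul_sq_eq_zero hrootC hquad with h | h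
        · exact absurd h hzr
        · rw [h, norm_neg, show (r : ℂ) + 1 / 4 = ((r + 1 / 4 : ℝ) : ℂ) by push_cast; rfl,
            Complex.norm_real, Real.norm_of_nonneg (by linarith)]
          linarith
    · linarith [two_fifths_lt_norm_of_one_sub_sub_two_mul_sq_sub_two_mul_cube_eq_zero hcubic]
end

section
/- For integers 4 ≤ p ≤ q with p = 2k or 2k+1 and q = 2ℓ or 2ℓ+1, the polynomial P_{pq}(x) = x^{ℓ+1} − x^ℓ − 2(x^{ℓ−1}+⋯+x^{ℓ−k+1}) − C_k x^{ℓ−k} − 2(x^{ℓ−1}+⋯+x) − C_ℓ (with C_k = 1 if p even, 2 if p odd; C_ℓ = 1 if q even, 2 if q odd) has a unique real root greater than 1, and this root is at least 2. -/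
/-!
Write `P(y) = y^{ℓ+1} - y^ℓ - Q(y)`, where `Q` has nonnegative coefficients and degree `< ℓ`.
For `y > 0`, `P(y) = y^ℓ (y - 1 - Q(y)/y^ℓ)` and `Q(y)/y^ℓ` is antitone, so the bracket is strictly
increasing: `P` has at most one positive root. Moreover `P(2) = 2^ℓ - Q(2) < 0` because `Q` contains
the term `2 · 2^{ℓ-1}`, while `P(y) > 0` for large `y` since `Q(y)/y^ℓ ≤ Q(1)` for `y ≥ 1`; the
intermediate value theorem gives a root in `[2, ∞)`.
-/

open Set Finset

lemma antitoneOn_pow_div_pow {i n : ℕ} (h : i ≤ n) :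
    AntitoneOn (fun y : ℝ => y ^ i / y ^ n) (Ioi 0) := by
  intro a ha b hb hab
  have hpow : ∀ y : ℝ, 0 < y → y ^ i / y ^ n = (y ^ (n - i))⁻¹ := fun y hy => by
    rw [← Nat.add_sub_cancel' h, pow_add, Nat.add_sub_cancel_left,
      div_mul_cancel_left₀ (pow_ne_zero _ hy.ne')]
  simp only [hpow a ha, hpow b hb]
  exact inv_anti₀ (pow_pos ha _) (pow_le_pow_left₀ ha.le hab _)

section LeadingTerms

variable {n : ℕ} {f Q : ℝ → ℝ}

lemma eq_pow_mul_sub_div_pow (hf : ∀ y, f y = y ^ (n + 1) - y ^ n - Q y) {y : ℝ} (hy : 0 < y) :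
    f y = y ^ n * (y - 1 - Q y / y ^ n) := by
  rw [hf, mul_sub, mul_div_cancel₀ _ (pow_ne_zero _ hy.ne')]
  ring

theorem exists_root_ge_two_unique_gt_one (hf : ∀ y, f y = y ^ (n + 1) - y ^ n - Q y)
    (hQ : AntitoneOn (fun y => Q y / y ^ n) (Ioi 0)) (hQc : Continuous Q) (h2 : 2 ^ n < Q 2) :
    ∃ x : ℝ, (1 < x ∧ f x = 0) ∧ 2 ≤ x ∧ ∀ y, 1 < y → f y = 0 → y = x := by
  set G : ℝ → ℝ := fun y => y - 1 - Q y / y ^ n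
  have hG : StrictMonoOn G (Ioi 0) := fun a ha b hb hab => by
    have := hQ ha hb hab.le
    simp only [G] at this ⊢
    linarith
  have root_iff : ∀ y : ℝ, 0 < y → (f y = 0 ↔ G y = 0) := fun y hy => by
    rw [eq_pow_mul_sub_div_pow hf hy, mul_eq_zero, or_iff_right (pow_ne_zero _ hy.ne')]
  set M := max 2 (Q 1 + 2)
  have hM : 2 ≤ M := le_max_left _ _
  have hfM : 0 ≤ f M := by
    have hQM : Q M / M ^ n ≤ Q 1 := by
      simpa using hQ (show (0 : ℝ) < 1 by norm_num) (show 0 < M by positivity) (by linarith)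
    have hQ1 : Q 1 + 2 ≤ M := le_max_right _ _
    rw [eq_pow_mul_sub_div_pow hf (by positivity)]
    exact mul_nonneg (by positivity) (by linarith)
  have hf2 : f 2 ≤ 0 := by
    rw [hf, pow_succ]
    linarith
  have hfc : Continuous f := by
    rw [funext hf]
    fun_prop
  obtain ⟨x, ⟨hx2, -⟩, hfx⟩ := intermediate_value_Icc hM hfc.continuousOn ⟨hf2, hfM⟩
  have hx0 : (0 : ℝ) < x := by linarith
  refine ⟨x, ⟨by linarith, hfx⟩, hx2, fun y hy hfy => ?_⟩
  have hy0 : (0 : ℝ) < y := by linarith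
  exact hG.injOn hy0 hx0 (((root_iff y hy0).1 hfy).trans ((root_iff x hx0).1 hfx).symm)

end LeadingTerms

/-- `P_{pq}(y) = y^{ℓ+1} - y^ℓ - lowerPart k ℓ C_k C_ℓ y`. -/
def lowerPart (k l : ℕ) (a b y : ℝ) : ℝ :=
  2 * ∑ i ∈ Ico (l - k + 1) l, y ^ i + a * y ^ (l - k) + 2 * ∑ i ∈ Ico 1 l, y ^ i + b

section LowerPart

variable {k l : ℕ} {a b : ℝ}

lemma continuous_lowerPart : Continuous (lowerPart k l a b) := by
  unfold lowerPart
  fun_prop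

lemma antitoneOn_lowerPart_div_pow (ha : 0 ≤ a) (hb : 0 ≤ b) :
    AntitoneOn (fun y => lowerPart k l a b y / y ^ l) (Ioi 0) := by
  intro x (hx : 0 < x) y (hy : 0 < y) hxy
  have hmono : ∀ i ≤ l, y ^ i / y ^ l ≤ x ^ i / x ^ l := fun i hi =>
    antitoneOn_pow_div_pow hi hx hy hxy
  simp only [lowerPart, add_div, mul_div_assoc, Finset.sum_div]
  gcongr 2 * ∑ i ∈ _, ?_ + _ * ?_ + 2 * ∑ i ∈ _, ?_ + ?_ with i hi i hi
  · exact hmono i (mem_Ico.1 hi).2.le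
  · exact hmono _ (Nat.sub_le _ _)
  · exact hmono i (mem_Ico.1 hi).2.le
  · gcongr

lemma two_pow_lt_lowerPart_two (hl : 2 ≤ l) (ha : 0 ≤ a) (hb : 0 < b) :
    (2 : ℝ) ^ l < lowerPart k l a b 2 := by
  have hlast : (2 : ℝ) ^ (l - 1) ≤ ∑ i ∈ Ico 1 l, (2 : ℝ) ^ i :=
    single_le_sum (f := fun i => (2 : ℝ) ^ i) (fun _ _ => by positivity)
      (mem_Ico.2 ⟨by omega, by omega⟩)
  have htop : (2 : ℝ) ^ l = 2 * 2 ^ (l - 1) := by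
    rw [← pow_succ', Nat.sub_add_cancel (by omega)]
  have hrest : 0 ≤ 2 * ∑ i ∈ Ico (l - k + 1) l, (2 : ℝ) ^ i + a * 2 ^ (l - k) := by positivity
  unfold lowerPart
  linarith

end LowerPart

theorem stmt18_general (p q k l : ℕ) (hp : 4 ≤ p) (hpq : p ≤ q)
    (hl : q = 2 * l ∨ q = 2 * l + 1) :
    ∃ x : ℝ, (1 < x ∧
        (fun y : ℝ => y ^ (l + 1) - y ^ l
            - 2 * (∑ i ∈ Finset.Ico (l - k + 1) l, y ^ i)
            - (if p = 2 * k then (1 : ℝ) else 2) * y ^ (l - k)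
            - 2 * (∑ i ∈ Finset.Ico 1 l, y ^ i)
            - (if q = 2 * l then (1 : ℝ) else 2)) x = 0) ∧
      2 ≤ x ∧
      ∀ y : ℝ, 1 < y →
        (fun y : ℝ => y ^ (l + 1) - y ^ l
            - 2 * (∑ i ∈ Finset.Ico (l - k + 1) l, y ^ i)
            - (if p = 2 * k then (1 : ℝ) else 2) * y ^ (l - k)
            - 2 * (∑ i ∈ Finset.Ico 1 l, y ^ i)
            - (if q = 2 * l then (1 : ℝ) else 2)) y = 0 → y = x := by
  set Ck : ℝ := if p = 2 * k then 1 else 2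
  set Cl : ℝ := if q = 2 * l then 1 else 2
  have hCk : 0 ≤ Ck := by positivity
  have hCl : 0 < Cl := by positivity
  exact exists_root_ge_two_unique_gt_one (Q := lowerPart k l Ck Cl)
    (fun y => by unfold lowerPart; ring) (antitoneOn_lowerPart_div_pow hCk hCl.le)
    continuous_lowerPart (two_pow_lt_lowerPart_two (by omega) hCk hCl)

/-- For 4 ≤ p ≤ q with p ∈ {2k, 2k+1}, q ∈ {2ℓ, 2ℓ+1}, the polynomial
P_{pq}(x) = x^{ℓ+1} − x^ℓ − 2(x^{ℓ−1}+⋯+x^{ℓ−k+1}) − C_k x^{ℓ−k}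
− 2(x^{ℓ−1}+⋯+x) − C_ℓ (C_k = 1 if p even else 2; C_ℓ = 1 if q even else 2)
has a unique real root greater than 1, and that root is at least 2. -/
theorem stmt18 (p q k l : ℕ) (hp : 4 ≤ p) (hpq : p ≤ q)
    (hk : p = 2 * k ∨ p = 2 * k + 1) (hl : q = 2 * l ∨ q = 2 * l + 1) :
    ∃ x : ℝ, (1 < x ∧
        (fun y : ℝ => y ^ (l + 1) - y ^ l
            - 2 * (∑ i ∈ Finset.Ico (l - k + 1) l, y ^ i)
            - (if p = 2 * k then (1 : ℝ) else 2) * y ^ (l - k)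
            - 2 * (∑ i ∈ Finset.Ico 1 l, y ^ i)
            - (if q = 2 * l then (1 : ℝ) else 2)) x = 0) ∧
      2 ≤ x ∧
      ∀ y : ℝ, 1 < y →
        (fun y : ℝ => y ^ (l + 1) - y ^ l
            - 2 * (∑ i ∈ Finset.Ico (l - k + 1) l, y ^ i)
            - (if p = 2 * k then (1 : ℝ) else 2) * y ^ (l - k)
            - 2 * (∑ i ∈ Finset.Ico 1 l, y ^ i)
            - (if q = 2 * l then (1 : ℝ) else 2)) y = 0 → y = x :=
  stmt18_general p q k l hp hpq hl
end
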